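/- If a chord diagram τ contains none of the four forbidden diagrams (ababcdcd), (abcdabcd), (abacdcbd), (abcadbdc), then the interlacement graph of τ is a disjoint union of a (possibly empty) set of isolated vertices and a complete bipartite or complete tripartite graph. -/

import Mathlib

/-- Strict cyclic betweenness on the cyclic group with `m` elements (`ZMod m`, realized as
`Fin m` so that the group is empty when `m = 0`): `b` lies on the open cyclic arc
from `a` to `c`. -/
def cyclicSbtw {m : ℕ} (a b c : Fin m) : Prop :=
  0 < (b.val + (m - a.val)) % m ∧ (b.val + (m - a.val)) % m < (c.val + (m - a.val)) % m

/-- A chord diagram of order `n`: a fixed-point-free involution `τ` of the cyclic group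
with `2n` elements (`ZMod (2n)`, realized as `Fin (2n)`); its chords are the pairs
`{i, τ i}`. -/
structure ChordDiagram (n : ℕ) where
  τ : Equiv.Perm (Fin (2 * n))
  invol : ∀ i, τ (τ i) = i
  fpf : ∀ i, τ i ≠ i

namespace ChordDiagram

/-- The boundary permutation `φ(i) = τ(i) + 1`. -/
def boundary {n : ℕ} (D : ChordDiagram n) : Equiv.Perm (Fin (2 * n)) :=
  D.τ.trans (finRotate (2 * n))

/-- The number `F` of boundary components: the number of orbits of the boundary
permutation, with the convention `F = 1` when `n = 0`. -/
noncomputable def F {n : ℕ} (D : ChordDiagram n) : ℕ :=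
  if n = 0 then 1
  else Nat.card (Quotient (MulAction.orbitRel (Subgroup.zpowers D.boundary) (Fin (2 * n))))

/-- Build a chord diagram from an involutive, fixed-point-free function. -/
def ofInvol {n : ℕ} (f : Fin (2 * n) → Fin (2 * n)) (h : Function.Involutive f)
    (hf : ∀ i, f i ≠ i) : ChordDiagram n :=
  ⟨Function.Involutive.toPerm f h, h, hf⟩

/-- The empty chord diagram (order 0). -/
def emptyDiagram : ChordDiagram 0 := ⟨1, fun i => i.elim0, fun i => i.elim0⟩

/-- The chord diagram `(abab)`: chords `{0,2}, {1,3}` on `ZMod 4`. -/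
def abab : ChordDiagram 2 := ofInvol ![2, 3, 0, 1] (by intro x; fin_cases x <;> rfl) (by decide)

/-- The chord diagram `(abcabc)`: chords `{0,3}, {1,4}, {2,5}` on `ZMod 6`. -/
def abcabc : ChordDiagram 3 :=
  ofInvol ![3, 4, 5, 0, 1, 2] (by intro x; fin_cases x <;> rfl) (by decide)

/-- The forbidden diagram `(ababcdcd)`: chords `{0,2},{1,3},{4,6},{5,7}` on `ZMod 8`. -/
def ababcdcd : ChordDiagram 4 :=
  ofInvol ![2, 3, 0, 1, 6, 7, 4, 5] (by intro x; fin_cases x <;> rfl) (by decide)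

/-- The forbidden diagram `(abcdabcd)`: chords `{0,4},{1,5},{2,6},{3,7}` on `ZMod 8`. -/
def abcdabcd : ChordDiagram 4 :=
  ofInvol ![4, 5, 6, 7, 0, 1, 2, 3] (by intro x; fin_cases x <;> rfl) (by decide)

/-- The forbidden diagram `(abacdcbd)`: chords `{0,2},{1,6},{3,5},{4,7}` on `ZMod 8`. -/
def abacdcbd : ChordDiagram 4 :=
  ofInvol ![2, 6, 0, 5, 7, 3, 1, 4] (by intro x; fin_cases x <;> rfl) (by decide)

/-- The forbidden diagram `(abcadbdc)`: chords `{0,3},{1,5},{2,7},{4,6}` on `ZMod 8`. -/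
def abcadbdc : ChordDiagram 4 :=
  ofInvol ![3, 5, 7, 0, 6, 1, 4, 2] (by intro x; fin_cases x <;> rfl) (by decide)

/-- The chords `{i, τ i}` and `{j, τ j}` interlace: exactly one of `j, τ j` lies on
the open cyclic arc from `i` to `τ i`. -/
def Interlaces {n : ℕ} (D : ChordDiagram n) (i j : Fin (2 * n)) : Prop :=
  Xor' (cyclicSbtw i j (D.τ i)) (cyclicSbtw i (D.τ j) (D.τ i))

/-- The type of chords of a chord diagram. -/
def Chord {n : ℕ} (D : ChordDiagram n) : Type :=
  {p : Sym2 (Fin (2 * n)) // ∃ i, p = s(i, D.τ i)}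

/-- The interlacement graph (graph of loops) of a chord diagram: vertices are the chords,
edges are the interlacing pairs of distinct chords. -/
def interGraph {n : ℕ} (D : ChordDiagram n) : SimpleGraph D.Chord where
  Adj c d := c ≠ d ∧
    ((∃ i j, c.1 = s(i, D.τ i) ∧ d.1 = s(j, D.τ j) ∧ D.Interlaces i j) ∨
     (∃ i j, d.1 = s(i, D.τ i) ∧ c.1 = s(j, D.τ j) ∧ D.Interlaces i j))
  symm := by
    constructor
    intro c d h
    exact ⟨h.1.symm, h.2.symm⟩
  loopless := by
    constructor
    intro c h
    exact h.1 rfl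

/-- A cyclic-order-preserving injection between cyclic groups. -/
def CycEmb {k m : ℕ} (f : Fin k → Fin m) : Prop :=
  Function.Injective f ∧ ∀ a b c, cyclicSbtw a b c → cyclicSbtw (f a) (f b) (f c)

/-- `D` contains the diagram `P`: the sub-diagram of `D` induced by some set of its chords
equals `P` up to rotation, i.e. there is a cyclic-order-preserving injection
`f : ZMod (2k) → ZMod (2n)` intertwining the involutions. -/
def Contains {n k : ℕ} (D : ChordDiagram n) (P : ChordDiagram k) : Prop :=
  ∃ f : Fin (2 * k) → Fin (2 * n), CycEmb f ∧ ∀ i, D.τ (f i) = f (P.τ i)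

/-- `D'` is obtained from `D` by deleting the chord `{j, τ j}` and renumbering the
remaining `2n` endpoints by the cyclic-order-preserving bijection onto `ZMod (2n)`. -/
def DeleteChord {n : ℕ} (D : ChordDiagram (n + 1)) (j : Fin (2 * (n + 1)))
    (D' : ChordDiagram n) : Prop :=
  ∃ f : Fin (2 * n) → Fin (2 * (n + 1)), CycEmb f ∧
    Set.range f = ({j, D.τ j} : Set (Fin (2 * (n + 1))))ᶜ ∧
    ∀ i, D.τ (f i) = f (D'.τ i)

/-- Reduction operation (α): deletion of an isolated chord `{i, i+1}` (where `τ i = i + 1`). -/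
def StepAlpha {n : ℕ} (D : ChordDiagram (n + 1)) (D' : ChordDiagram n) : Prop :=
  ∃ i, D.τ i = finRotate (2 * (n + 1)) i ∧ DeleteChord D i D'

/-- Reduction operation (β): deletion of the chord `{i+1, τ(i+1)}` from a parallel pair,
i.e. `τ(i+1) = τ(i) - 1` with the chords `{i, τ i}` and `{i+1, τ(i+1)}` distinct. -/
def StepBeta {n : ℕ} (D : ChordDiagram (n + 1)) (D' : ChordDiagram n) : Prop :=
  ∃ i, D.τ (finRotate (2 * (n + 1)) i) = (finRotate (2 * (n + 1))).symm (D.τ i) ∧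
    D.τ i ≠ finRotate (2 * (n + 1)) i ∧
    DeleteChord D (finRotate (2 * (n + 1)) i) D'

/-- One reduction step (operation (α) or (β)) between chord diagrams. -/
def Step (p q : Σ n, ChordDiagram n) : Prop :=
  ∃ h : p.1 = q.1 + 1,
    StepAlpha (cast (congrArg ChordDiagram h) p.2) q.2 ∨
    StepBeta (cast (congrArg ChordDiagram h) p.2) q.2

/-- `p` reduces to `q` by finitely many operations (α), (β) (possibly none). -/
def Reduces (p q : Σ n, ChordDiagram n) : Prop := Relation.ReflTransGen Step p q

/-- `D` reduces to one of the diagrams `()`, `(abab)`, `(abcabc)`. -/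
def ReducesToBasic {n : ℕ} (D : ChordDiagram n) : Prop :=
  Reduces ⟨n, D⟩ ⟨0, emptyDiagram⟩ ∨ Reduces ⟨n, D⟩ ⟨2, abab⟩ ∨ Reduces ⟨n, D⟩ ⟨3, abcabc⟩

end ChordDiagram

/-- A simple graph is a disjoint union of a (possibly empty) set of isolated vertices and a
complete bipartite or complete tripartite graph: there are three pairwise disjoint sets
`A`, `B`, `C` of vertices (a part may be empty; `C = ∅` gives the complete bipartite case)
such that two vertices are adjacent iff they lie in two different ones of these parts;
all remaining vertices are isolated. -/
def IsIsolatedPlusCompleteMultipartite {V : Type*} (G : SimpleGraph V) : Prop :=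
  ∃ A B C : Set V, Disjoint A B ∧ Disjoint A C ∧ Disjoint B C ∧
    ∀ v w, G.Adj v w ↔
      ((v ∈ A ∧ w ∈ B) ∨ (v ∈ B ∧ w ∈ A) ∨ (v ∈ A ∧ w ∈ C) ∨ (v ∈ C ∧ w ∈ A) ∨
       (v ∈ B ∧ w ∈ C) ∨ (v ∈ C ∧ w ∈ B))

/-!
On four chords the interlacement pattern determines the sub-diagram up to rotation: the graphs
`2K₂`, `K₄`, `P₄` and the paw are realized only by `(ababcdcd)`, `(abcdabcd)`, `(abacdcbd)` and
`(abcadbdc)` respectively, a finite check over the matchings of eight points. Hence the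
interlacement graph of `D` contains none of these four graphs as an induced subgraph. Excluding
`2K₂`, `P₄` and the paw makes non-adjacency transitive through every non-isolated vertex, so the
non-isolated vertices form a complete multipartite graph; excluding `K₄` leaves at most three parts.
-/

section CyclicOrder

variable {m : ℕ}

instance (a b c : Fin m) : Decidable (cyclicSbtw a b c) :=
  inferInstanceAs (Decidable (_ ∧ _))

theorem cyclicSbtw_iff_val_sub (a b c : Fin m) :
    cyclicSbtw a b c ↔ 0 < (b - a).val ∧ (b - a).val < (c - a).val := by
  simp only [cyclicSbtw, Fin.val_sub, Nat.add_comm (m - a.val)]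

theorem cyclicSbtw_iff (a b c : Fin m) :
    cyclicSbtw a b c ↔ a < b ∧ b < c ∨ b < c ∧ c < a ∨ c < a ∧ a < b := by
  have sub_val (x : Fin m) :
      ((x - a : Fin m) : ℕ) = if a ≤ x then (x : ℕ) - a else m + x - a := by
    split_ifs with h
    exacts [Fin.coe_sub_iff_le.2 h, Fin.coe_sub_iff_lt.2 (not_le.1 h)]
  rw [cyclicSbtw_iff_val_sub, sub_val, sub_val]
  simp only [Fin.lt_def, Fin.le_def]
  have := a.isLt
  split_ifs <;> omega

theorem cyclicSbtw_add_right [NeZero m] (a b c s : Fin m) :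
    cyclicSbtw (a + s) (b + s) (c + s) ↔ cyclicSbtw a b c := by
  simp only [cyclicSbtw_iff_val_sub, add_sub_add_right_eq_sub]

theorem StrictMono.cyclicSbtw_iff {k : ℕ} {g : Fin k → Fin m} (hg : StrictMono g)
    (a b c : Fin k) : cyclicSbtw (g a) (g b) (g c) ↔ cyclicSbtw a b c := by
  simp only [_root_.cyclicSbtw_iff, hg.lt_iff_lt]

/-- `D.Interlaces i j` unfolds to `ChordsCross i (D.τ i) j (D.τ j)`. -/
def ChordsCross (x x' y y' : Fin m) : Prop :=
  Xor (cyclicSbtw x y x') (cyclicSbtw x y' x')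

instance (x x' y y' : Fin m) : Decidable (ChordsCross x x' y y') :=
  inferInstanceAs (Decidable (Xor _ _))

theorem chordsCross_swap_right (x x' y y' : Fin m) :
    ChordsCross x x' y' y ↔ ChordsCross x x' y y' :=
  iff_of_eq (xor_comm _ _)

variable {x x' y y' : Fin m}

theorem chordsCross_swap_left (h₁ : x ≠ y) (h₂ : x ≠ y') (h₃ : x' ≠ y) (h₄ : x' ≠ y') :
    ChordsCross x' x y y' ↔ ChordsCross x x' y y' := by
  simp only [ChordsCross, _root_.cyclicSbtw_iff, Xor, Fin.lt_def, ne_eq, Fin.ext_iff] at *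
  rcases Nat.lt_or_gt_of_ne h₁ with h | h <;> rcases Nat.lt_or_gt_of_ne h₂ with h' | h' <;> omega

theorem chordsCross_comm (h₁ : x ≠ y) (h₂ : x' ≠ y') :
    ChordsCross y y' x x' ↔ ChordsCross x x' y y' := by
  simp only [ChordsCross, _root_.cyclicSbtw_iff, Xor, Fin.lt_def, ne_eq, Fin.ext_iff] at *
  rcases Nat.lt_or_gt_of_ne h₁ with h | h <;> rcases Nat.lt_or_gt_of_ne h₂ with h' | h' <;> omega

theorem chordsCross_map {k : ℕ} {g : Fin k → Fin m}
    (hg : ∀ a b c, cyclicSbtw (g a) (g b) (g c) ↔ cyclicSbtw a b c) (x x' y y' : Fin k) :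
    ChordsCross (g x) (g x') (g y) (g y') ↔ ChordsCross x x' y y' := by
  simp only [ChordsCross, hg]

theorem exists_cyclic_factorization {α : Type*} [Fintype α] {k : ℕ} [NeZero k]
    (hk : Fintype.card α = k) {e : α → Fin m} (he : Function.Injective e) (a₀ : α) :
    ∃ (g : Fin k → Fin m) (ℓ : α → Fin k), Function.Injective g ∧
      (∀ a b c, cyclicSbtw (g a) (g b) (g c) ↔ cyclicSbtw a b c) ∧ g ∘ ℓ = e ∧ ℓ a₀ = 0 := by
  have hcard : (Finset.univ.image e).card = k := by
    rw [Finset.card_image_of_injective _ he, Finset.card_univ, hk]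
  set iso := (Finset.univ.image e).orderIsoOfFin hcard
  set pos : α → Fin k := fun a => iso.symm ⟨e a, by simp⟩
  refine ⟨fun q => iso (q + pos a₀), fun a => pos a - pos a₀, fun p q h => ?_, fun a b c => ?_,
    funext fun a => ?_, sub_self _⟩
  · simpa using iso.injective (Subtype.ext h)
  · exact ((Subtype.strictMono_coe _).comp iso.strictMono).cyclicSbtw_iff _ _ _ |>.trans
      (cyclicSbtw_add_right a b c _)
  · simp [pos]

end CyclicOrder

namespace SimpleGraph

variable {V W : Type*} {G : SimpleGraph V}

def twoK2 : SimpleGraph (Fin 4) := fromRel fun i j => (i, j) ∈ [(0, 1), (2, 3)]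

def paw : SimpleGraph (Fin 4) := fromRel fun i j => (i, j) ∈ [(0, 1), (0, 2), (1, 2), (2, 3)]

instance : DecidableRel twoK2.Adj := fun _ _ => inferInstanceAs (Decidable (_ ∧ _))

instance : DecidableRel paw.Adj := fun _ _ => inferInstanceAs (Decidable (_ ∧ _))

instance {n : ℕ} : DecidableRel (pathGraph n).Adj := fun _ _ => decidable_of_iff' _ pathGraph_adj

theorem isIndContained_of_adj_iff {H : SimpleGraph W}
    (hH : ∀ k l, (∀ m, H.Adj k m ↔ H.Adj l m) → k = l) (f : W → V)
    (hf : ∀ k l, G.Adj (f k) (f l) ↔ H.Adj k l) : H ⊴ G :=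
  ⟨⟨⟨f, fun k l hkl => hH k l fun m => by rw [← hf, ← hf, hkl]⟩, hf _ _⟩⟩

theorem twoK2_isIndContained {a b c d : V} (hab : G.Adj a b) (hcd : G.Adj c d)
    (hac : ¬G.Adj a c) (had : ¬G.Adj a d) (hbc : ¬G.Adj b c) (hbd : ¬G.Adj b d) :
    twoK2 ⊴ G := by
  refine isIndContained_of_adj_iff (by decide) ![a, b, c, d] fun k l => ?_
  fin_cases k <;> fin_cases l <;>
    simp [twoK2, hab, hab.symm, hcd, hcd.symm, hac, had, hbc, hbd, G.adj_comm c, G.adj_comm d]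

theorem completeGraph_isIndContained {a b c d : V} (hab : G.Adj a b) (hac : G.Adj a c)
    (had : G.Adj a d) (hbc : G.Adj b c) (hbd : G.Adj b d) (hcd : G.Adj c d) :
    completeGraph (Fin 4) ⊴ G := by
  refine isIndContained_of_adj_iff (by decide) ![a, b, c, d] fun k l => ?_
  fin_cases k <;> fin_cases l <;>
    simp [hab, hab.symm, hac, hac.symm, had, had.symm, hbc, hbc.symm, hbd, hbd.symm, hcd, hcd.symm]

theorem pathGraph_four_isIndContained {a b c d : V} (hab : G.Adj a b) (hbc : G.Adj b c)
    (hcd : G.Adj c d) (hac : ¬G.Adj a c) (had : ¬G.Adj a d) (hbd : ¬G.Adj b d) :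
    pathGraph 4 ⊴ G := by
  refine isIndContained_of_adj_iff (by decide) ![a, b, c, d] fun k l => ?_
  fin_cases k <;> fin_cases l <;>
    simp [pathGraph_adj, hab, hab.symm, hbc, hbc.symm, hcd, hcd.symm, hac, had, hbd,
      G.adj_comm c, G.adj_comm d]

theorem paw_isIndContained {a b c d : V} (hab : G.Adj a b) (hac : G.Adj a c)
    (hbc : G.Adj b c) (hcd : G.Adj c d) (had : ¬G.Adj a d) (hbd : ¬G.Adj b d) :
    paw ⊴ G := by
  refine isIndContained_of_adj_iff (by decide) ![a, b, c, d] fun k l => ?_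
  fin_cases k <;> fin_cases l <;>
    simp [paw, hab, hab.symm, hac, hac.symm, hbc, hbc.symm, hcd, hcd.symm, had, hbd,
      G.adj_comm d]

theorem not_adj_trans_of_not_isIndContained (h2K2 : ¬twoK2 ⊴ G) (hP4 : ¬pathGraph 4 ⊴ G)
    (hpaw : ¬paw ⊴ G) {u v w : V} (hv : ∃ x, G.Adj v x) (huv : ¬G.Adj u v)
    (hvw : ¬G.Adj v w) : ¬G.Adj u w := by
  obtain ⟨x, hvx⟩ := hv
  intro huw
  by_cases hxu : G.Adj x u <;> by_cases hxw : G.Adj x w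
  · exact hpaw (paw_isIndContained huw hxu.symm hxw.symm hvx.symm huv (hvw ·.symm))
  · exact hP4 (pathGraph_four_isIndContained huw.symm hxu.symm hvx.symm (hxw ·.symm)
      (hvw ·.symm) huv)
  · exact hP4 (pathGraph_four_isIndContained huw hxw.symm hvx.symm (hxu ·.symm) huv
      (hvw ·.symm))
  · exact h2K2 (twoK2_isIndContained huw hvx huv (hxu ·.symm) (hvw ·.symm) (hxw ·.symm))

theorem isIsolatedPlusCompleteMultipartite_of_not_isIndContained (h2K2 : ¬twoK2 ⊴ G)
    (hK4 : ¬completeGraph (Fin 4) ⊴ G) (hP4 : ¬pathGraph 4 ⊴ G) (hpaw : ¬paw ⊴ G) :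
    IsIsolatedPlusCompleteMultipartite G := by
  by_cases hE : ∃ v₀ v₁, G.Adj v₀ v₁
  swap
  · push Not at hE
    exact ⟨∅, ∅, ∅, by simp, by simp, by simp, fun v w => by simp [hE]⟩
  obtain ⟨v₀, v₁, h01⟩ := hE
  have nonadj_trans {u v w : V} (hv : ∃ x, G.Adj v x) (huv : ¬G.Adj u v) (hvw : ¬G.Adj v w) :
      ¬G.Adj u w :=
    not_adj_trans_of_not_isIndContained h2K2 hP4 hpaw hv huv hvw
  have adj_of {v p q : V} (hp : ∃ x, G.Adj p x) (hvp : ¬G.Adj v p) (hvq : G.Adj v q) :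
      G.Adj p q := by
    by_contra hpq
    exact nonadj_trans hp hvp hpq hvq
  refine ⟨{z | (∃ x, G.Adj z x) ∧ ¬G.Adj v₀ z},
    {z | (∃ x, G.Adj z x) ∧ G.Adj v₀ z ∧ ¬G.Adj v₁ z},
    {z | (∃ x, G.Adj z x) ∧ G.Adj v₀ z ∧ G.Adj v₁ z},
    Set.disjoint_left.2 fun z hA hB => hA.2 hB.2.1,
    Set.disjoint_left.2 fun z hA hC => hA.2 hC.2.1,
    Set.disjoint_left.2 fun z hB hC => hB.2.2 hC.2.2, fun p q => ⟨fun hpq => ?_, ?_⟩⟩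
  · have hp : ∃ x, G.Adj p x := ⟨q, hpq⟩
    have hq : ∃ x, G.Adj q x := ⟨p, hpq.symm⟩
    have sameA : ¬G.Adj v₀ p → ¬G.Adj v₀ q → False :=
      fun h0p h0q => nonadj_trans ⟨v₁, h01⟩ (h0p ·.symm) h0q hpq
    have sameB : ¬G.Adj v₁ p → ¬G.Adj v₁ q → False :=
      fun h1p h1q => nonadj_trans ⟨v₀, h01.symm⟩ (h1p ·.symm) h1q hpq
    have sameC : G.Adj v₀ p → G.Adj v₀ q → G.Adj v₁ p → G.Adj v₁ q → False :=
      fun h0p h0q h1p h1q => hK4 (completeGraph_isIndContained h01 h0p h0q h1p h1q hpq)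
    clear adj_of nonadj_trans h2K2 hK4 hP4 hpaw
    simp only [Set.mem_ofPred_eq]
    by_cases h0p : G.Adj v₀ p <;> by_cases h0q : G.Adj v₀ q <;> by_cases h1p : G.Adj v₁ p <;>
      by_cases h1q : G.Adj v₁ q <;> simp_all
  · rintro (⟨hp, hq⟩ | ⟨hp, hq⟩ | ⟨hp, hq⟩ | ⟨hp, hq⟩ | ⟨hp, hq⟩ | ⟨hp, hq⟩)
    · exact adj_of hp.1 hp.2 hq.2.1
    · exact (adj_of hq.1 hq.2 hp.2.1).symm
    · exact adj_of hp.1 hp.2 hq.2.1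
    · exact (adj_of hq.1 hq.2 hp.2.1).symm
    · exact adj_of hp.1 hp.2.2 hq.2.2
    · exact (adj_of hq.1 hq.2.2 hp.2.2).symm

end SimpleGraph

open SimpleGraph

namespace ChordDiagram

variable {n : ℕ} (D : ChordDiagram n)

theorem endpoints_ne_of_ne {i j : Fin (2 * n)} (h : s(i, D.τ i) ≠ s(j, D.τ j)) :
    i ≠ j ∧ i ≠ D.τ j ∧ D.τ i ≠ j ∧ D.τ i ≠ D.τ j := by
  refine ⟨?_, ?_, fun e => ?_, fun e => h (by rw [D.τ.injective e])⟩ <;> try rintro rfl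
  · exact h rfl
  · exact h (by rw [D.invol, Sym2.eq_swap])
  · exact h (by rw [← e, D.invol, Sym2.eq_swap])

theorem chordsCross_congr {i i' j j' : Fin (2 * n)} (hi : s(i', D.τ i') = s(i, D.τ i))
    (hj : s(j', D.τ j') = s(j, D.τ j)) (hij : s(i, D.τ i) ≠ s(j, D.τ j)) :
    ChordsCross i' (D.τ i') j' (D.τ j') ↔ ChordsCross i (D.τ i) j (D.τ j) := by
  obtain ⟨h₁, h₂, h₃, h₄⟩ := D.endpoints_ne_of_ne hij
  have rep {k k' : Fin (2 * n)} (h : s(k', D.τ k') = s(k, D.τ k)) : k' = k ∨ k' = D.τ k := by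
    rcases Sym2.eq_iff.mp h with ⟨h, -⟩ | ⟨h, -⟩ <;> simp [h]
  rcases rep hi with rfl | rfl <;> rcases rep hj with rfl | rfl <;>
    simp only [D.invol, chordsCross_swap_right, chordsCross_swap_left h₁ h₂ h₃ h₄]

theorem interGraph_adj_iff {v w : D.Chord} {i j : Fin (2 * n)} (hv : v.1 = s(i, D.τ i))
    (hw : w.1 = s(j, D.τ j)) (hvw : v ≠ w) :
    D.interGraph.Adj v w ↔ ChordsCross i (D.τ i) j (D.τ j) := by
  have hij : s(i, D.τ i) ≠ s(j, D.τ j) := fun h => hvw (Subtype.ext (hv.trans (h.trans hw.symm)))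
  refine ⟨?_, fun h => ⟨hvw, Or.inl ⟨i, j, hv, hw, h⟩⟩⟩
  rintro ⟨-, ⟨i', j', hi', hj', h⟩ | ⟨j', i', hj', hi', h⟩⟩
  · exact (D.chordsCross_congr (hi'.symm.trans hv) (hj'.symm.trans hw) hij).1 h
  · obtain ⟨h₁, -, -, h₄⟩ := D.endpoints_ne_of_ne hij
    exact (chordsCross_comm h₁ h₄).1
      ((D.chordsCross_congr (hj'.symm.trans hw) (hi'.symm.trans hv) hij.symm).1 h)

theorem injective_endpoints {ι : Type*} {c : ι → D.Chord} (hc : Function.Injective c)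
    {i : ι → Fin (2 * n)} (hi : ∀ k, (c k).1 = s(i k, D.τ (i k))) :
    Function.Injective (Sum.elim i (D.τ ∘ i)) := by
  have chord_eq (k l : ι) (h : s(i k, D.τ (i k)) = s(i l, D.τ (i l))) : k = l :=
    hc (Subtype.ext ((hi k).trans (h.trans (hi l).symm)))
  rintro (k | k) (l | l) h <;> simp only [Sum.elim_inl, Sum.elim_inr, Function.comp_apply] at h
  · rw [chord_eq k l (by rw [h])]
  · obtain rfl : k = l := chord_eq k l (by rw [h, D.invol, Sym2.eq_swap])
    exact absurd h.symm (D.fpf _)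
  · obtain rfl : k = l := chord_eq k l (by rw [← h, D.invol, Sym2.eq_swap])
    exact absurd h (D.fpf _)
  · rw [chord_eq k l (by rw [D.τ.injective h])]

/-- Up to rotation, `Q` is the only matching of `Fin 8` into chords `{0, a'}, {b, b'}, {c, c'},
{d, d'}` that cross exactly as the vertices `0, 1, 2, 3` of `H` are adjacent. The quantifiers are
nested so that `decide` discards a partial matching as soon as one of its crossings disagrees
with `H`. -/
def IsOnlyRealizationOf (Q : ChordDiagram 4) (H : SimpleGraph (Fin 4)) [DecidableRel H.Adj] :
    Prop :=
  ∀ a', a' ∉ [0] → ∀ b, b ∉ [a', 0] → ∀ b', b' ∉ [b, a', 0] →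
    (ChordsCross 0 a' b b' ↔ H.Adj 0 1) →
  ∀ c, c ∉ [b', b, a', 0] → ∀ c', c' ∉ [c, b', b, a', 0] →
    (ChordsCross 0 a' c c' ↔ H.Adj 0 2) → (ChordsCross b b' c c' ↔ H.Adj 1 2) →
  ∀ d, d ∉ [c', c, b', b, a', 0] → ∀ d', d' ∉ [d, c', c, b', b, a', 0] →
    (ChordsCross 0 a' d d' ↔ H.Adj 0 3) → (ChordsCross b b' d d' ↔ H.Adj 1 3) →
    (ChordsCross c c' d d' ↔ H.Adj 2 3) →
  ∃ r, ∀ k, Q.τ (![0, b, c, d] k - r) + r = ![a', b', c', d'] k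

set_option synthInstance.maxSize 10000 in
theorem ababcdcd_isOnlyRealizationOf : ababcdcd.IsOnlyRealizationOf twoK2 := by
  unfold IsOnlyRealizationOf
  decide +kernel

set_option synthInstance.maxSize 10000 in
theorem abcdabcd_isOnlyRealizationOf : abcdabcd.IsOnlyRealizationOf (completeGraph (Fin 4)) := by
  unfold IsOnlyRealizationOf
  decide +kernel

set_option synthInstance.maxSize 10000 in
theorem abacdcbd_isOnlyRealizationOf : abacdcbd.IsOnlyRealizationOf (pathGraph 4) := by
  unfold IsOnlyRealizationOf
  decide +kernel

set_option synthInstance.maxSize 10000 in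
theorem abcadbdc_isOnlyRealizationOf : abcadbdc.IsOnlyRealizationOf paw := by
  unfold IsOnlyRealizationOf
  decide +kernel

theorem contains_of_rotation {k : ℕ} [NeZero k] {Q : ChordDiagram k}
    {g : Fin (2 * k) → Fin (2 * n)} (hg : Function.Injective g)
    (hgc : ∀ a b c, cyclicSbtw (g a) (g b) (g c) ↔ cyclicSbtw a b c) (r : Fin (2 * k))
    (h : ∀ x, D.τ (g (x + r)) = g (Q.τ x + r)) : D.Contains Q :=
  ⟨fun x => g (x + r), ⟨fun _ _ hxy => add_right_cancel (hg hxy),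
    fun a b c habc => (hgc _ _ _).2 ((cyclicSbtw_add_right a b c r).2 habc)⟩, h⟩

theorem contains_of_isIndContained {H : SimpleGraph (Fin 4)} [DecidableRel H.Adj]
    {Q : ChordDiagram 4} (hQ : Q.IsOnlyRealizationOf H) (hH : H ⊴ D.interGraph) :
    D.Contains Q := by
  obtain ⟨e⟩ := hH
  choose i hi using fun k => (e k).2
  have hends := D.injective_endpoints e.injective hi
  obtain ⟨g, ℓ, hg, hgc, hgℓ, hℓ0⟩ := exists_cyclic_factorization (k := 8) (by simp) hends (.inl 0)
  have hgℓ' (p) : g (ℓ p) = Sum.elim i (D.τ ∘ i) p := congrFun hgℓ p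
  have hℓ : Function.Injective ℓ := fun p q h => hends (by rw [← hgℓ', h, hgℓ'])
  have cross (k l : Fin 4) (hkl : k ≠ l) :
      ChordsCross (ℓ (.inl k)) (ℓ (.inr k)) (ℓ (.inl l)) (ℓ (.inr l)) ↔ H.Adj k l := by
    rw [← chordsCross_map hgc, hgℓ', hgℓ', hgℓ', hgℓ', ← e.map_adj_iff]
    exact (D.interGraph_adj_iff (hi k) (hi l) (e.injective.ne hkl)).symm
  obtain ⟨r, hr⟩ : ∃ r, ∀ k, Q.τ (ℓ (.inl k) - r) + r = ℓ (.inr k) := by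
    have := hQ (ℓ (.inr 0)) ?_ (ℓ (.inl 1)) ?_ (ℓ (.inr 1)) ?_ ?_ (ℓ (.inl 2)) ?_ (ℓ (.inr 2)) ?_
      ?_ ?_ (ℓ (.inl 3)) ?_ (ℓ (.inr 3)) ?_ ?_ ?_ ?_
    · obtain ⟨r, hr⟩ := this
      refine ⟨r, fun k => ?_⟩
      have hrk := hr k
      fin_cases k <;> simpa [hℓ0] using hrk
    all_goals
      try rw [← hℓ0]
      first
        | exact cross _ _ (by decide)
        | simp [hℓ.eq_iff]
  have hsurj : Function.Surjective ℓ :=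
    ((Fintype.bijective_iff_injective_and_card ℓ).2 ⟨hℓ, by simp⟩).2
  refine D.contains_of_rotation hg hgc r fun x => ?_
  obtain ⟨p, hp⟩ := hsurj (x + r)
  obtain rfl : x = ℓ p - r := eq_sub_of_add_eq hp.symm
  rcases p with k | k
  · rw [sub_add_cancel, hr k, hgℓ', hgℓ']
    rfl
  · rw [sub_add_cancel, ← eq_sub_of_add_eq (hr k), Q.invol, sub_add_cancel, hgℓ', hgℓ']
    exact D.invol _

end ChordDiagram

/-- **(B ⇒ C).** If a chord diagram `D` contains none of the four forbidden diagrams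
`(ababcdcd)`, `(abcdabcd)`, `(abacdcbd)`, `(abcadbdc)`, then its interlacement graph is a
disjoint union of a (possibly empty) set of isolated vertices and a complete bipartite or
complete tripartite graph. -/
theorem no_forbidden_implies_interGraph_multipartite (n : ℕ) (D : ChordDiagram n)
    (h1 : ¬ D.Contains ChordDiagram.ababcdcd) (h2 : ¬ D.Contains ChordDiagram.abcdabcd)
    (h3 : ¬ D.Contains ChordDiagram.abacdcbd) (h4 : ¬ D.Contains ChordDiagram.abcadbdc) :
    IsIsolatedPlusCompleteMultipartite D.interGraph :=
  isIsolatedPlusCompleteMultipartite_of_not_isIndContained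
    (fun h => h1 (D.contains_of_isIndContained ChordDiagram.ababcdcd_isOnlyRealizationOf h))
    (fun h => h2 (D.contains_of_isIndContained ChordDiagram.abcdabcd_isOnlyRealizationOf h))
    (fun h => h3 (D.contains_of_isIndContained ChordDiagram.abacdcbd_isOnlyRealizationOf h))
    (fun h => h4 (D.contains_of_isIndContained ChordDiagram.abcadbdc_isOnlyRealizationOf h))
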